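/- Let n ≥ 4 and t ∈ {n−1, n}, and let t' be the other element of {n−1, n}. For a strict partition λ = (λ_1 > ⋯ > λ_ℓ > 0) with λ_1 ≤ n−1, define the residue of a box (i,j) of its shifted diagram (i ≤ j ≤ i+λ_i−1) by: res(i,i) := t if i is odd, res(i,i) := t' if i is even, and res(i,j) := n+i−j−1 if j > i. Then the map λ ↦ Λ_t − Σ_{(i,j)∈λ} α_{res(i,j)} is a bijection from the set of such strict partitions (shifted diagrams contained in the staircase (n−1, …, 2, 1)) onto the orbit of Λ_t under the type D_n Weyl group; explicitly, onto the set of vectors (ε_1/2, …, ε_n/2) with ε_i ∈ {1, −1} such that the number of indices i with ε_i = −1 is congruent to n−t modulo 2. -/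

import Mathlib

namespace Stmt4

/-- Standard basis vector `e_k` (1-indexed) of `ℚ^n`. -/
def E (n k : ℕ) : Fin n → ℚ := fun x => if (x : ℕ) + 1 = k then 1 else 0

/-- Type `D_n` simple roots: `α_k = e_k - e_{k+1}` for `1 ≤ k ≤ n-1`
and `α_n = e_{n-1} + e_n`. -/
def alpha (n k : ℕ) : Fin n → ℚ :=
  if k = n then E n (n - 1) + E n n else E n k - E n (k + 1)

/-- `Λ_n = (e_1 + ⋯ + e_n)/2` and `Λ_{n-1} = (e_1 + ⋯ + e_{n-1} - e_n)/2`. -/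
def Lam (n t : ℕ) : Fin n → ℚ :=
  fun x => if t = n then 1 / 2 else if (x : ℕ) + 1 = n then -(1 / 2) else 1 / 2

/-- Strict partitions `λ_1 > ⋯ > λ_ℓ > 0` with `λ_1 ≤ n - 1`, i.e. shifted Young
diagrams contained in the staircase `(n-1, …, 2, 1)`. -/
def SP (n : ℕ) : Type :=
  {l : Fin (n - 1) → ℕ // (∀ i j : Fin (n - 1), i < j → 0 < l j → l j < l i) ∧
    ∀ i, l i ≤ n - 1}

/-- `λ ↦ Λ_t - ∑_{(i,j) ∈ λ} α_{res(i,j)}` with the type `D_n` spin residue convention: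
`res(i,i) = t` for `i` odd, `res(i,i) = t'` for `i` even, and `res(i,j) = n + i - j - 1`
for `j > i` (so the boxes `(i, i+k)`, `1 ≤ k ≤ λ_i - 1`, have residues `n - 1 - k`). -/
def toWt (n t t' : ℕ) (l : SP n) : Fin n → ℚ :=
  Lam n t - ∑ i : Fin (n - 1),
    (if 0 < l.1 i then
      alpha n (if (i.val + 1) % 2 = 1 then t else t') +
        ∑ k ∈ Finset.Icc 1 (l.1 i - 1), alpha n (n - 1 - k)
    else 0)

/-! ### Auxiliary definitions -/

open Finset

/-- The support (set of nonempty rows) of a strict partition. -/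
def supp (n : ℕ) (l : SP n) : Finset (Fin (n - 1)) :=
  Finset.univ.filter fun i => 0 < l.1 i

/-- Number of nonempty rows. -/
def LL (n : ℕ) (l : SP n) : ℕ := (supp n l).card

/-- The set of parts. -/
def PP (n : ℕ) (l : SP n) : Finset ℕ := (supp n l).image l.1

lemma mem_supp_iff (n : ℕ) (l : SP n) (i : Fin (n - 1)) :
    0 < l.1 i ↔ i.val < LL n l := by
  constructor
  · intro h
    have hsub : Finset.Iic i ⊆ supp n l := by
      intro j hj
      simp only [Finset.mem_Iic] at hj
      simp only [supp, Finset.mem_filter, Finset.mem_univ, true_and]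
      rcases lt_or_eq_of_le hj with hlt | rfl
      · exact lt_trans h (l.2.1 j i hlt h)
      · exact h
    have := Finset.card_le_card hsub
    rw [Fin.card_Iic] at this
    simp only [LL]
    omega
  · intro h
    by_contra hc
    have hsub : supp n l ⊆ Finset.Iio i := by
      intro j hj
      simp only [supp, Finset.mem_filter, Finset.mem_univ, true_and] at hj
      simp only [Finset.mem_Iio]
      rcases lt_trichotomy j i with hlt | rfl | hgt
      · exact hlt
      · exact absurd hj hc
      · exact absurd (lt_trans hj (l.2.1 i j hgt hj)) hc
    have := Finset.card_le_card hsub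
    rw [Fin.card_Iio] at this
    simp only [LL] at h
    omega

lemma LL_le (n : ℕ) (l : SP n) : LL n l ≤ n - 1 := by
  have := Finset.card_le_univ (supp n l)
  simpa [LL] using this

lemma injOn_supp (n : ℕ) (l : SP n) : Set.InjOn l.1 ↑(supp n l) := by
  intro i hi j hj hij
  simp only [Finset.coe_filter, supp, Set.mem_setOf_eq] at hi hj
  rcases lt_trichotomy i j with h | h | h
  · exact absurd hij (ne_of_gt (l.2.1 i j h hj.2))
  · exact h
  · exact absurd hij.symm (ne_of_gt (l.2.1 j i h hi.2))

lemma card_PP (n : ℕ) (l : SP n) : (PP n l).card = LL n l :=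
  Finset.card_image_of_injOn (injOn_supp n l)

lemma mem_PP_bounds (n : ℕ) (l : SP n) {m : ℕ} (hm : m ∈ PP n l) :
    1 ≤ m ∧ m ≤ n - 1 := by
  simp only [PP, Finset.mem_image] at hm
  obtain ⟨i, hi, rfl⟩ := hm
  simp only [supp, Finset.mem_filter] at hi
  exact ⟨hi.2, l.2.2 i⟩

/-! ### Pointwise formula for `toWt` -/

lemma alpha_top (n : ℕ) (hn : 4 ≤ n) : alpha n n = E n (n - 1) + E n n := by
  simp [alpha]

lemma alpha_subtop (n : ℕ) (hn : 4 ≤ n) : alpha n (n - 1) = E n (n - 1) - E n n := by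
  have h1 : n - 1 ≠ n := by omega
  have h2 : n - 1 + 1 = n := by omega
  simp [alpha, h1, h2]

lemma tele (n : ℕ) (hn : 4 ≤ n) : ∀ m, 1 ≤ m → m ≤ n - 1 →
    ∑ k ∈ Finset.Icc 1 (m - 1), alpha n (n - 1 - k) = E n (n - m) - E n (n - 1) := by
  intro m
  induction m with
  | zero => omega
  | succ m ih =>
    intro _ hm2
    rcases Nat.eq_zero_or_pos m with rfl | hm
    · simp
    · have h1 : m + 1 - 1 = (m - 1) + 1 := by omega
      rw [h1, Finset.sum_Icc_succ_top (by omega)]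
      rw [ih hm (by omega)]
      have h2 : m - 1 + 1 = m := by omega
      rw [h2]
      have h5 : n - 1 - m = n - (m + 1) := by omega
      rw [h5, alpha, if_neg (show n - (m + 1) ≠ n by omega),
        show n - (m + 1) + 1 = n - m from by omega]
      abel

lemma ite_add_zero' {c : Prop} [Decidable c] (A B : ℚ) :
    (if c then A + B else 0) = (if c then A else 0) + (if c then B else 0) := by
  split <;> simp

lemma sum_range_sign (a : ℚ) (m : ℕ) :
    ∑ i ∈ Finset.range m, (if i % 2 = 0 then a else -a) = ((m % 2 : ℕ) : ℚ) * a := by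
  induction m with
  | zero => simp
  | succ m ih =>
    rw [Finset.sum_range_succ, ih]
    rcases Nat.even_or_odd m with h | h
    · have h1 : m % 2 = 0 := Nat.even_iff.mp h
      have h2 : (m + 1) % 2 = 1 := by omega
      simp [h1, h2]
    · have h1 : m % 2 = 1 := Nat.odd_iff.mp h
      have h2 : (m + 1) % 2 = 0 := by omega
      simp [h1, h2]

lemma sumB (N ℓ : ℕ) (hℓ : ℓ ≤ N) (a : ℚ) :
    ∑ i : Fin N, (if i.val < ℓ then (if i.val % 2 = 0 then a else -a) else 0)
      = ((ℓ % 2 : ℕ) : ℚ) * a := by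
  rw [Fin.sum_univ_eq_sum_range (fun i => if i < ℓ then (if i % 2 = 0 then a else -a) else 0)]
  have : ∀ i ∈ Finset.range N,
      (if i < ℓ then (if i % 2 = 0 then a else -a) else 0)
        = (if i ∈ Finset.range ℓ then (if i % 2 = 0 then a else -a) else 0) := by
    intro i _
    simp [Finset.mem_range]
  rw [Finset.sum_congr rfl this, Finset.sum_ite_mem,
    Finset.inter_eq_right.mpr (Finset.range_subset_range.mpr hℓ)]
  exact sum_range_sign a ℓ

lemma sumA (n : ℕ) (l : SP n) (v : ℕ) :
    (∑ i : Fin (n - 1), if 0 < l.1 i then (if l.1 i = v then (1 : ℚ) else 0) else 0)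
      = if v ∈ PP n l then 1 else 0 := by
  have h1 : (∑ i : Fin (n - 1), if 0 < l.1 i then (if l.1 i = v then (1 : ℚ) else 0) else 0)
      = ∑ i ∈ supp n l, (if l.1 i = v then (1 : ℚ) else 0) := by
    rw [supp, Finset.sum_filter]
  rw [h1]
  by_cases hv : v ∈ PP n l
  · simp only [PP, Finset.mem_image] at hv
    obtain ⟨i₀, hi₀, hv₀⟩ := hv
    rw [if_pos (by simp only [PP, Finset.mem_image]; exact ⟨i₀, hi₀, hv₀⟩)]
    rw [Finset.sum_eq_single i₀]
    · simp [hv₀]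
    · intro j hj hne
      rw [if_neg]
      intro hjv
      exact hne (injOn_supp n l hj hi₀ (hjv.trans hv₀.symm))
    · intro h; exact absurd hi₀ h
  · rw [if_neg hv]
    apply Finset.sum_eq_zero
    intro i hi
    rw [if_neg]
    intro hiv
    exact hv (by simp only [PP, Finset.mem_image]; exact ⟨i, hi, hiv⟩)

lemma toWt_apply (n t t' : ℕ) (hn : 4 ≤ n)
    (htt' : (t = n ∧ t' = n - 1) ∨ (t = n - 1 ∧ t' = n)) (l : SP n) (x : Fin n) :
    toWt n t t' l x =
      if x.val + 1 = n then
        (1 / 2 - ((LL n l % 2 : ℕ) : ℚ)) * (if t = n then 1 else -1)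
      else (if (n - 1 - x.val) ∈ PP n l then -(1 / 2) else 1 / 2) := by
  have key : ∀ i : Fin (n - 1),
      (if 0 < l.1 i then
        alpha n (if (i.val + 1) % 2 = 1 then t else t') +
          ∑ k ∈ Finset.Icc 1 (l.1 i - 1), alpha n (n - 1 - k)
      else 0)
      = (if 0 < l.1 i then
          E n (n - l.1 i) +
            (if (i.val + 1) % 2 = 1 then (if t = n then (1:ℚ) else -1)
              else (if t = n then (-1:ℚ) else 1)) • E n n
        else 0) := by
    intro i
    split
    case isFalse => rfl
    case isTrue h =>
      have hb : l.1 i ≤ n - 1 := l.2.2 i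
      rw [tele n hn (l.1 i) h hb]
      rcases htt' with ⟨ht, ht'⟩ | ⟨ht, ht'⟩
      · split
        case isTrue hpar =>
          rw [ht, alpha_top n hn]
          module
        case isFalse hpar =>
          rw [ht', alpha_subtop n hn]
          module
      · have hne : t ≠ n := by omega
        split
        case isTrue hpar =>
          rw [ht, alpha_subtop n hn]
          module
        case isFalse hpar =>
          rw [ht', alpha_top n hn]
          module
  rw [toWt]
  simp only [key]
  rw [Pi.sub_apply, Finset.sum_apply]
  have expand : ∀ i : Fin (n - 1),
      ((if 0 < l.1 i then
          E n (n - l.1 i) +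
            (if (i.val + 1) % 2 = 1 then (if t = n then (1:ℚ) else -1)
              else (if t = n then (-1:ℚ) else 1)) • E n n
        else 0) : Fin n → ℚ) x
      = (if 0 < l.1 i then E n (n - l.1 i) x else 0) +
        (if 0 < l.1 i then
          (if (i.val + 1) % 2 = 1 then (if t = n then (1:ℚ) else -1)
            else (if t = n then (-1:ℚ) else 1)) * E n n x
        else 0) := by
    intro i
    split
    · rw [Pi.add_apply, Pi.smul_apply, smul_eq_mul]
    · simp
  rw [Finset.sum_congr rfl (fun i _ => expand i), Finset.sum_add_distrib]
  by_cases hx : x.val + 1 = n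
  · rw [if_pos hx]
    have hA : (∑ i : Fin (n - 1), if 0 < l.1 i then E n (n - l.1 i) x else 0) = 0 := by
      apply Finset.sum_eq_zero
      intro i _
      split
      case isFalse => rfl
      case isTrue h =>
        have hb : l.1 i ≤ n - 1 := l.2.2 i
        simp only [E]
        rw [if_neg (by omega)]
    rw [hA]
    have hEnn : E n n x = 1 := by simp [E, hx]
    have hLam : Lam n t x = (if t = n then (1:ℚ)/2 else -(1/2)) := by
      rcases htt' with ⟨ht, _⟩ | ⟨ht, _⟩
      · simp [Lam, ht]
      · have hne : t ≠ n := by omega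
        simp [Lam, hne, hx]
    have hB : (∑ i : Fin (n - 1), if 0 < l.1 i then
          (if (i.val + 1) % 2 = 1 then (if t = n then (1:ℚ) else -1)
            else (if t = n then (-1:ℚ) else 1)) * E n n x
        else 0)
        = ((LL n l % 2 : ℕ) : ℚ) * (if t = n then 1 else -1) := by
      have hc : ∀ i : Fin (n - 1),
          (if 0 < l.1 i then
            (if (i.val + 1) % 2 = 1 then (if t = n then (1:ℚ) else -1)
              else (if t = n then (-1:ℚ) else 1)) * E n n x
          else 0)
          = (if i.val < LL n l then
              (if i.val % 2 = 0 then (if t = n then (1:ℚ) else -1)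
                else -(if t = n then (1:ℚ) else -1)) else 0) := by
        intro i
        have hpar : (i.val + 1) % 2 = 1 ↔ i.val % 2 = 0 := by omega
        by_cases h : 0 < l.1 i
        · rw [if_pos h, if_pos ((mem_supp_iff n l i).mp h), hEnn, mul_one]
          by_cases hp : i.val % 2 = 0
          · rw [if_pos (hpar.mpr hp), if_pos hp]
          · rw [if_neg (fun hh => hp (hpar.mp hh)), if_neg hp]
            split <;> ring
        · rw [if_neg h, if_neg (fun hh => h ((mem_supp_iff n l i).mpr hh))]
      rw [Finset.sum_congr rfl (fun i _ => hc i)]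
      exact sumB (n - 1) (LL n l) (LL_le n l) _
    rw [hB, hLam]
    split <;> ring
  · rw [if_neg hx]
    have hEnn : E n n x = 0 := by simp [E, hx]
    have hLam : Lam n t x = 1/2 := by
      simp [Lam, hx]
    have hB : (∑ i : Fin (n - 1), if 0 < l.1 i then
          (if (i.val + 1) % 2 = 1 then (if t = n then (1:ℚ) else -1)
            else (if t = n then (-1:ℚ) else 1)) * E n n x
        else 0) = 0 := by
      apply Finset.sum_eq_zero
      intro i _
      rw [hEnn]
      split <;> simp
    have hxlt : x.val + 1 < n := by omega
    have hA : (∑ i : Fin (n - 1), if 0 < l.1 i then E n (n - l.1 i) x else 0)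
        = if (n - 1 - x.val) ∈ PP n l then 1 else 0 := by
      have hc : ∀ i : Fin (n - 1),
          (if 0 < l.1 i then E n (n - l.1 i) x else 0)
          = (if 0 < l.1 i then (if l.1 i = n - 1 - x.val then (1:ℚ) else 0) else 0) := by
        intro i
        split
        case isFalse => rfl
        case isTrue h =>
          have hb : l.1 i ≤ n - 1 := l.2.2 i
          simp only [E]
          congr 1
          · simp only [eq_iff_iff]
            omega
      rw [Finset.sum_congr rfl (fun i _ => hc i)]
      exact sumA n l _
    rw [hA, hB, hLam]
    split <;> norm_num

/-! ### The inverse construction -/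

/-- The strict partition with given set of parts. -/
def ofParts (n : ℕ) (P : Finset ℕ) (hP : ∀ m ∈ P, 1 ≤ m ∧ m ≤ n - 1) : SP n :=
  ⟨fun i => if h : i.val < P.card then
      P.orderEmbOfFin rfl ⟨P.card - 1 - i.val, by omega⟩ else 0,
   by
    constructor
    · intro i j hij hj
      have hij' : i.val < j.val := hij
      dsimp only at hj ⊢
      by_cases hcj : j.val < P.card
      · have hci : i.val < P.card := by omega
        rw [dif_pos hcj] at hj ⊢
        rw [dif_pos hci]
        exact (P.orderEmbOfFin rfl).strictMono (by rw [Fin.mk_lt_mk]; omega)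
      · rw [dif_neg hcj] at hj
        omega
    · intro i
      dsimp only
      by_cases hci : i.val < P.card
      · rw [dif_pos hci]
        exact (hP _ (Finset.orderEmbOfFin_mem P rfl _)).2
      · rw [dif_neg hci]; omega⟩

lemma ofParts_pos (n : ℕ) (P : Finset ℕ) (hP : ∀ m ∈ P, 1 ≤ m ∧ m ≤ n - 1)
    (i : Fin (n - 1)) : 0 < (ofParts n P hP).1 i ↔ i.val < P.card := by
  simp only [ofParts]
  split
  case isTrue h =>
    exact iff_of_true (hP _ (Finset.orderEmbOfFin_mem P rfl _)).1 h
  case isFalse h =>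
    exact iff_of_false (by omega) h

lemma card_P_le (n : ℕ) (P : Finset ℕ) (hP : ∀ m ∈ P, 1 ≤ m ∧ m ≤ n - 1) :
    P.card ≤ n - 1 := by
  calc P.card ≤ (Finset.Icc 1 (n - 1)).card :=
        Finset.card_le_card (fun x hx => Finset.mem_Icc.mpr (hP x hx))
    _ = n - 1 := by rw [Nat.card_Icc]; omega

lemma PP_ofParts (n : ℕ) (P : Finset ℕ) (hP : ∀ m ∈ P, 1 ≤ m ∧ m ≤ n - 1) :
    PP n (ofParts n P hP) = P := by
  have hcard : P.card ≤ n - 1 := card_P_le n P hP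
  ext m
  simp only [PP, Finset.mem_image]
  constructor
  · rintro ⟨i, hi, rfl⟩
    simp only [supp, Finset.mem_filter, Finset.mem_univ, true_and] at hi
    have h := (ofParts_pos n P hP i).mp hi
    simp only [ofParts]
    rw [dif_pos h]
    exact Finset.orderEmbOfFin_mem P rfl _
  · intro hm
    have : m ∈ Set.range (P.orderEmbOfFin rfl) := by
      rw [Finset.range_orderEmbOfFin]; exact hm
    obtain ⟨j, hj⟩ := this
    have hjlt := j.isLt
    refine ⟨⟨P.card - 1 - j.val, by omega⟩, ?_, ?_⟩
    · simp only [supp, Finset.mem_filter, Finset.mem_univ, true_and]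
      exact (ofParts_pos n P hP _).mpr (show P.card - 1 - j.val < P.card by omega)
    · simp only [ofParts]
      rw [dif_pos (show P.card - 1 - j.val < P.card by omega)]
      rw [show (⟨P.card - 1 - (P.card - 1 - j.val), by omega⟩ : Fin P.card) = j from
        Fin.ext (show P.card - 1 - (P.card - 1 - j.val) = j.val by omega)]
      exact hj

lemma LL_ofParts (n : ℕ) (P : Finset ℕ) (hP : ∀ m ∈ P, 1 ≤ m ∧ m ≤ n - 1) :
    LL n (ofParts n P hP) = P.card := by
  rw [← card_PP n (ofParts n P hP), PP_ofParts]

/-! ### A strict partition is determined by its set of parts -/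

lemma l_eq_emb (n : ℕ) (l : SP n) (s : Finset ℕ) (c : ℕ) (hs : s = PP n l)
    (hc : c = LL n l) (hcard : s.card = c) (i : Fin (n - 1)) (hi : i.val < c) :
    l.1 i = s.orderEmbOfFin hcard ⟨c - 1 - i.val, by omega⟩ := by
  subst hs hc
  have hcle : LL n l ≤ n - 1 := LL_le n l
  have hfs : ∀ j : Fin (LL n l),
      l.1 ⟨LL n l - 1 - j.val, by have := j.isLt; omega⟩ ∈ PP n l := by
    intro j
    have hj := j.isLt
    apply Finset.mem_image_of_mem
    simp only [supp, Finset.mem_filter, Finset.mem_univ, true_and]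
    exact (mem_supp_iff n l _).mpr (show LL n l - 1 - j.val < LL n l by omega)
  have hmono : StrictMono
      (fun j : Fin (LL n l) => l.1 ⟨LL n l - 1 - j.val, by have := j.isLt; omega⟩) := by
    intro a b hab
    have ha := a.isLt
    have hb := b.isLt
    have hab' : a.val < b.val := hab
    exact l.2.1 _ _ (Fin.mk_lt_mk.mpr (by omega))
      ((mem_supp_iff n l _).mpr (show LL n l - 1 - a.val < LL n l by omega))
  have huniq := Finset.orderEmbOfFin_unique hcard hfs hmono
  have happ := congrFun huniq ⟨LL n l - 1 - i.val, by omega⟩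
  dsimp only at happ
  rw [← happ]
  exact congrArg l.1 (Fin.ext
    (show i.val = LL n l - 1 - (LL n l - 1 - i.val) from by omega))

lemma SP_ext_of_PP (n : ℕ) (l l' : SP n) (h : PP n l = PP n l') : l = l' := by
  have hL : LL n l = LL n l' := by rw [← card_PP, h, card_PP]
  apply Subtype.ext
  funext i
  by_cases hi : i.val < LL n l
  · rw [l_eq_emb n l (PP n l) (LL n l) rfl rfl (card_PP n l) i hi,
      l_eq_emb n l' (PP n l) (LL n l) h hL (card_PP n l) i hi]
  · have h1 := mem_supp_iff n l i
    have h2 := mem_supp_iff n l' i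
    omega

/-! ### Main theorem -/

theorem stmt4 (n t t' : ℕ) (hn : 4 ≤ n)
    (htt' : (t = n ∧ t' = n - 1) ∨ (t = n - 1 ∧ t' = n)) :
    Set.BijOn (toWt n t t') Set.univ
      {v : Fin n → ℚ | (∀ x, v x = 1 / 2 ∨ v x = -(1 / 2)) ∧
        (Finset.univ.filter fun x => v x = -(1 / 2)).card % 2 = (n - t) % 2} := by
  refine ⟨?_, ?_, ?_⟩
  · -- MapsTo
    intro l _
    simp only [Set.mem_setOf_eq]
    have hap := toWt_apply n t t' hn htt' l
    constructor
    · intro x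
      rw [hap x]
      split
      · rcases Nat.mod_two_eq_zero_or_one (LL n l) with hr | hr <;>
          rw [hr] <;> split <;> norm_num
      · split <;> norm_num
    · set v := toWt n t t' l with hv
      set S := Finset.univ.filter (fun x : Fin n => v x = -(1/2)) with hS
      set last : Fin n := ⟨n - 1, by omega⟩ with hlastdef
      have hlast : last.val + 1 = n := by show n - 1 + 1 = n; omega
      have herase : (S.erase last).card = (PP n l).card := by
        apply Finset.card_nbij (fun x => n - 1 - x.val)
        · intro a ha
          simp only [hS, Finset.mem_coe, Finset.mem_erase, Finset.mem_filter, Finset.mem_univ,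
            true_and] at ha
          obtain ⟨hane, hav⟩ := ha
          have hanev : a.val + 1 ≠ n := by
            intro hh
            exact hane (Fin.ext (show a.val = n - 1 by omega))
          have := hap a
          rw [if_neg hanev] at this
          by_cases hmem : (n - 1 - a.val) ∈ PP n l
          · exact hmem
          · rw [if_neg hmem] at this
            rw [hav] at this
            norm_num at this
        · intro a ha b hb hab
          simp only [hS, Finset.coe_erase, Set.mem_diff, Finset.coe_filter] at ha hb
          have h1 : a ≠ last := by simpa using ha.2
          have h2 : b ≠ last := by simpa using hb.2
          have h1' : a.val ≠ n - 1 := fun hh => h1 (Fin.ext hh)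
          have h2' : b.val ≠ n - 1 := fun hh => h2 (Fin.ext hh)
          have := a.isLt
          have := b.isLt
          have hab' : n - 1 - a.val = n - 1 - b.val := hab
          exact Fin.ext (by omega)
        · intro m hm
          have hm' : m ∈ PP n l := hm
          have hb := mem_PP_bounds n l hm'
          refine ⟨⟨n - 1 - m, by omega⟩, ?_, show n - 1 - (n - 1 - m) = m by omega⟩
          have hne : (⟨n - 1 - m, by omega⟩ : Fin n).val + 1 ≠ n := by
            show n - 1 - m + 1 ≠ n; omega
          have hval := hap ⟨n - 1 - m, by omega⟩
          rw [if_neg hne] at hval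
          rw [show n - 1 - (⟨n - 1 - m, by omega⟩ : Fin n).val = m from by
            show n - 1 - (n - 1 - m) = m; omega] at hval
          rw [if_pos hm'] at hval
          simp only [Finset.coe_erase, Set.mem_diff, Set.mem_singleton_iff, hS,
            Finset.coe_filter, Set.mem_setOf_eq, Finset.mem_univ, true_and]
          refine ⟨hval, fun hh => ?_⟩
          have hvv : (⟨n - 1 - m, by omega⟩ : Fin n).val = last.val := by rw [hh]
          have hvv' : n - 1 - m = n - 1 := hvv
          omega
      rw [card_PP] at herase
      have hlv := hap last
      rw [if_pos hlast] at hlv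
      have hmemS : last ∈ S ↔ v last = -(1/2) := by
        simp [hS]
      have hcardS : S.card = (S.erase last).card + (if last ∈ S then 1 else 0) := by
        by_cases hmem : last ∈ S
        · rw [if_pos hmem]
          exact (Finset.card_erase_add_one hmem).symm
        · rw [if_neg hmem, Finset.erase_eq_of_notMem hmem, add_zero]
      rcases htt' with ⟨ht, _⟩ | ⟨ht, _⟩
      · have hnt : (n - t) % 2 = 0 := by omega
        rw [hnt]
        rw [if_pos ht] at hlv
        rcases Nat.mod_two_eq_zero_or_one (LL n l) with hr | hr
        · have hvl : v last = 1/2 := by rw [hlv, hr]; norm_num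
          have hnot : last ∉ S := fun hh => by
            rw [hmemS] at hh; rw [hvl] at hh; norm_num at hh
          rw [if_neg hnot] at hcardS
          omega
        · have hvl : v last = -(1/2) := by rw [hlv, hr]; norm_num
          rw [if_pos (hmemS.mpr hvl)] at hcardS
          omega
      · have hne : t ≠ n := by omega
        have hnt : (n - t) % 2 = 1 := by omega
        rw [hnt]
        rw [if_neg hne] at hlv
        rcases Nat.mod_two_eq_zero_or_one (LL n l) with hr | hr
        · have hvl : v last = -(1/2) := by rw [hlv, hr]; norm_num
          rw [if_pos (hmemS.mpr hvl)] at hcardS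
          omega
        · have hvl : v last = 1/2 := by rw [hlv, hr]; norm_num
          have hnot : last ∉ S := fun hh => by
            rw [hmemS] at hh; rw [hvl] at hh; norm_num at hh
          rw [if_neg hnot] at hcardS
          omega
  · -- InjOn
    intro l _ l' _ heq
    apply SP_ext_of_PP n l l'
    ext m
    by_cases hm1 : 1 ≤ m ∧ m ≤ n - 1
    · set x : Fin n := ⟨n - 1 - m, by omega⟩ with hxdef
      have hx : x.val + 1 ≠ n := by simp only [hxdef]; omega
      have hmm : n - 1 - x.val = m := by simp only [hxdef]; omega
      have h1 := toWt_apply n t t' hn htt' l x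
      have h2 := toWt_apply n t t' hn htt' l' x
      rw [if_neg hx, hmm] at h1 h2
      have hxx : toWt n t t' l x = toWt n t t' l' x := congrFun heq x
      rw [h1, h2] at hxx
      constructor
      · intro hin
        rw [if_pos hin] at hxx
        by_contra hnin
        rw [if_neg hnin] at hxx
        norm_num at hxx
      · intro hin
        rw [if_pos hin] at hxx
        by_contra hnin
        rw [if_neg hnin] at hxx
        norm_num at hxx
    · constructor
      · intro hmem; exact absurd (mem_PP_bounds n l hmem) hm1
      · intro hmem; exact absurd (mem_PP_bounds n l' hmem) hm1
  · -- SurjOn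
    intro v hv
    simp only [Set.mem_setOf_eq] at hv
    obtain ⟨hval, hpar⟩ := hv
    set T := Finset.univ.filter (fun x : Fin n => x.val + 1 ≠ n ∧ v x = -(1/2)) with hT
    set P := T.image (fun x => n - 1 - x.val) with hPdef
    have hP : ∀ m ∈ P, 1 ≤ m ∧ m ≤ n - 1 := by
      intro m hm
      simp only [hPdef, hT, Finset.mem_image, Finset.mem_filter, Finset.mem_univ,
        true_and] at hm
      obtain ⟨x, ⟨hx1, _⟩, rfl⟩ := hm
      have := x.isLt
      omega
    refine ⟨ofParts n P hP, Set.mem_univ _, ?_⟩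
    have hPP := PP_ofParts n P hP
    funext x
    rw [toWt_apply n t t' hn htt' (ofParts n P hP) x]
    by_cases hx : x.val + 1 = n
    · rw [if_pos hx]
      have hLL : LL n (ofParts n P hP) = P.card := LL_ofParts n P hP
      have hcardP : P.card = T.card := by
        apply Finset.card_image_of_injOn
        intro a ha b hb hab
        simp only [hT, Finset.coe_filter, Set.mem_setOf_eq, Finset.mem_univ,
          true_and] at ha hb
        obtain ⟨ha1, -⟩ := ha
        obtain ⟨hb1, -⟩ := hb
        have hab' : n - 1 - a.val = n - 1 - b.val := hab
        have := a.isLt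
        have := b.isLt
        exact Fin.ext (by omega)
      set S := Finset.univ.filter (fun y : Fin n => v y = -(1/2)) with hS
      have hTS : T = S.erase x := by
        ext y
        simp only [hT, hS, Finset.mem_filter, Finset.mem_univ, true_and,
          Finset.mem_erase]
        constructor
        · rintro ⟨hy1, hy2⟩
          refine ⟨fun hh => ?_, hy2⟩
          rw [hh] at hy1
          exact hy1 hx
        · rintro ⟨hy1, hy2⟩
          refine ⟨fun hh => ?_, hy2⟩
          exact hy1 (Fin.ext (by have := y.isLt; have := x.isLt; omega))
      have hmemS : x ∈ S ↔ v x = -(1/2) := by simp [hS]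
      have hcardS : S.card = (S.erase x).card + (if x ∈ S then 1 else 0) := by
        by_cases hmem : x ∈ S
        · rw [if_pos hmem]
          exact (Finset.card_erase_add_one hmem).symm
        · rw [if_neg hmem, Finset.erase_eq_of_notMem hmem, add_zero]
      rw [← hTS] at hcardS
      rcases htt' with ⟨ht, _⟩ | ⟨ht, _⟩
      · have hnt : (n - t) % 2 = 0 := by omega
        rw [hnt] at hpar
        rw [if_pos ht]
        by_cases hmem : x ∈ S
        · have hv2 : v x = -(1/2) := hmemS.mp hmem
          rw [if_pos hmem] at hcardS
          have hodd : LL n (ofParts n P hP) % 2 = 1 := by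
            rw [hLL, hcardP]; omega
          rw [hodd, hv2]
          norm_num
        · have hv2 : v x = 1/2 := by
            rcases hval x with h | h
            · exact h
            · exact absurd (hmemS.mpr h) hmem
          rw [if_neg hmem, add_zero] at hcardS
          have heven : LL n (ofParts n P hP) % 2 = 0 := by
            rw [hLL, hcardP]; omega
          rw [heven, hv2]
          norm_num
      · have hne : t ≠ n := by omega
        have hnt : (n - t) % 2 = 1 := by omega
        rw [hnt] at hpar
        rw [if_neg hne]
        by_cases hmem : x ∈ S
        · have hv2 : v x = -(1/2) := hmemS.mp hmem
          rw [if_pos hmem] at hcardS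
          have heven : LL n (ofParts n P hP) % 2 = 0 := by
            rw [hLL, hcardP]; omega
          rw [heven, hv2]
          norm_num
        · have hv2 : v x = 1/2 := by
            rcases hval x with h | h
            · exact h
            · exact absurd (hmemS.mpr h) hmem
          rw [if_neg hmem, add_zero] at hcardS
          have hodd : LL n (ofParts n P hP) % 2 = 1 := by
            rw [hLL, hcardP]; omega
          rw [hodd, hv2]
          norm_num
    · rw [if_neg hx, hPP]
      have hmem : (n - 1 - x.val) ∈ P ↔ v x = -(1/2) := by
        simp only [hPdef, hT, Finset.mem_image, Finset.mem_filter, Finset.mem_univ,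
          true_and]
        constructor
        · rintro ⟨y, ⟨hy1, hy2⟩, hyx⟩
          have hyeq : y = x := Fin.ext (by have := y.isLt; have := x.isLt; omega)
          rwa [← hyeq]
        · intro hvx
          exact ⟨x, ⟨hx, hvx⟩, rfl⟩
      by_cases hvx : v x = -(1/2)
      · rw [if_pos (hmem.mpr hvx), hvx]
      · rw [if_neg (fun hh => hvx (hmem.mp hh))]
        rcases hval x with h | h
        · exact h.symm
        · exact absurd h hvx

end Stmt4
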